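/- arXiv:2604.21600 — 3 statements merged into one kernel-verified Lean document; each statement's English description precedes it below -/
import Mathlib

section
/- If U = (ρ, ρu, ρv, E) is an admissible Euler state (ρ > 0, p > 0 with p = (γ-1)(E - ρ(u²+v²)/2), γ > 1), ν ∈ ℝ² is a unit vector, and α₀ ≥ |u·ν| + c where c = √(γp/ρ), then both states U + (1/α₀) F(U)·ν and U - (1/α₀) F(U)·ν are admissible, where F(U)·ν = ((ρu)·ν, (ρu·ν)u + pν₁, (ρu·ν)v + pν₂, (E+p)(u·ν)). -/
/-!
Write `s = ±1/α₀`, `uₙ = u·ν` and `c = √(γp/ρ)`. The new density is `ρ (1 + s uₙ)`, positive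
because `|s uₙ| < 1`. Since `|ν| = 1`, the new internal energy satisfies
`2 ρ' E' - |m'|² = (1 + s uₙ)² (2ρE - ρ²|u|²) - s² p²`, and `2ρE - ρ²|u|² = 2ρp/(γ - 1)`.
Positivity thus reduces to `(γ - 1) s² p < 2ρ (1 + s uₙ)²`, which follows from
`s² γ p = ρ s² c² ≤ ρ (1 + s uₙ)²`, i.e. from `|s| c ≤ 1 + s uₙ`.
-/

/-- States are `U = (ρ, ρu, ρv, E)`; the second condition says `E - ρ|u|²/2 = p/(γ - 1) > 0`. -/
def eulerAdmissible : Set (Fin 4 → ℝ) :=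
  {U | 0 < U 0 ∧ 0 < U 3 - ((U 1) ^ 2 + (U 2) ^ 2) / (2 * U 0)}

lemma mem_eulerAdmissible_iff {U : Fin 4 → ℝ} :
    U ∈ eulerAdmissible ↔ 0 < U 0 ∧ U 1 ^ 2 + U 2 ^ 2 < 2 * U 0 * U 3 := by
  refine and_congr_right fun hρ => ?_
  rw [sub_pos, div_lt_iff₀ (by positivity), mul_comm]

lemma abs_mul_le_one_add_mul {s a c : ℝ} (h : |s| * (|a| + c) ≤ 1) : |s| * c ≤ 1 + s * a := by
  have : -(s * a) ≤ |s| * |a| := (neg_le_abs _).trans (abs_mul s a).le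
  linarith

lemma one_add_mul_pos {s a c : ℝ} (hc : 0 < c) (h : |s| * (|a| + c) ≤ 1) : 0 < 1 + s * a := by
  rcases eq_or_ne s 0 with rfl | hs
  · simp
  · exact (mul_pos (abs_pos.mpr hs) hc).trans_le (abs_mul_le_one_add_mul h)

lemma euler_add_smul_flux_mem_eulerAdmissible (γ ρ u v E p ν₁ ν₂ s : ℝ)
    (hγ : 1 < γ) (hρ : 0 < ρ) (hp : p = (γ - 1) * (E - ρ * (u ^ 2 + v ^ 2) / 2)) (hppos : 0 < p)
    (hν : ν₁ ^ 2 + ν₂ ^ 2 = 1)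
    (hs : |s| * (|u * ν₁ + v * ν₂| + Real.sqrt (γ * p / ρ)) ≤ 1) :
    ![ρ, ρ * u, ρ * v, E] + s • ![ρ * (u * ν₁ + v * ν₂),
      ρ * (u * ν₁ + v * ν₂) * u + p * ν₁, ρ * (u * ν₁ + v * ν₂) * v + p * ν₂,
      (E + p) * (u * ν₁ + v * ν₂)] ∈ eulerAdmissible := by
  set un := u * ν₁ + v * ν₂ with hun
  have hc2 : Real.sqrt (γ * p / ρ) ^ 2 * ρ = γ * p := by
    rw [Real.sq_sqrt (by positivity)]
    field_simp
  have hpos : 0 < 1 + s * un := one_add_mul_pos (by positivity) hs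
  have hsound : s ^ 2 * (γ * p) ≤ ρ * (1 + s * un) ^ 2 := by
    have hsq := pow_le_pow_left₀ (by positivity) (abs_mul_le_one_add_mul hs) 2
    rw [mul_pow, sq_abs] at hsq
    calc s ^ 2 * (γ * p) = s ^ 2 * Real.sqrt (γ * p / ρ) ^ 2 * ρ := by rw [mul_assoc, hc2]
      _ ≤ ρ * (1 + s * un) ^ 2 := by nlinarith
  have henergy : (γ - 1) * (2 * ρ * E - ρ ^ 2 * (u ^ 2 + v ^ 2)) = 2 * ρ * p := by
    linear_combination (-2) * ρ * hp
  have hidentity : 2 * (ρ + s * (ρ * un)) * (E + s * ((E + p) * un)) -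
      ((ρ * u + s * (ρ * un * u + p * ν₁)) ^ 2 + (ρ * v + s * (ρ * un * v + p * ν₂)) ^ 2) =
      (1 + s * un) ^ 2 * (2 * ρ * E - ρ ^ 2 * (u ^ 2 + v ^ 2)) - s ^ 2 * p ^ 2 := by
    rw [hun]
    linear_combination (-(s * p) ^ 2) * hν
  rw [mem_eulerAdmissible_iff]
  simp only [Pi.add_apply, Pi.smul_apply, smul_eq_mul, Matrix.cons_val_zero, Matrix.cons_val_one,
    Matrix.cons_val_two, Matrix.cons_val_three, Matrix.head_cons, Matrix.tail_cons]
  constructor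
  · nlinarith [mul_pos hρ hpos]
  · have hscaled : 0 < (γ - 1) *
        ((1 + s * un) ^ 2 * (2 * ρ * E - ρ ^ 2 * (u ^ 2 + v ^ 2)) - s ^ 2 * p ^ 2) := by
      rw [mul_sub, mul_left_comm, henergy]
      nlinarith [mul_pos hppos (mul_pos hρ (pow_pos hpos 2)),
        mul_nonneg hppos.le (sq_nonneg (s * p))]
    linarith [pos_of_mul_pos_right hscaled (by linarith)]

/-- Lax–Friedrichs admissibility property: for an admissible Euler state `U`,
a unit direction `ν`, and `α₀ ≥ |u·ν| + c`, both `U ± (1/α₀) F(U)·ν` are admissible. -/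
theorem laxFriedrichs_admissible
    (γ ρ u v E p ν₁ ν₂ α₀ : ℝ)
    (hγ : 1 < γ) (hρ : 0 < ρ)
    (hp : p = (γ - 1) * (E - ρ * (u ^ 2 + v ^ 2) / 2))
    (hppos : 0 < p)
    (hν : ν₁ ^ 2 + ν₂ ^ 2 = 1)
    (hα : |u * ν₁ + v * ν₂| + Real.sqrt (γ * p / ρ) ≤ α₀) :
    let un : ℝ := u * ν₁ + v * ν₂
    let U : Fin 4 → ℝ := ![ρ, ρ * u, ρ * v, E]
    let Fν : Fin 4 → ℝ := ![ρ * un, ρ * un * u + p * ν₁, ρ * un * v + p * ν₂, (E + p) * un]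
    U + (1 / α₀) • Fν ∈ eulerAdmissible ∧ U - (1 / α₀) • Fν ∈ eulerAdmissible := by
  intro un U Fν
  have hα₀ : 0 < α₀ := lt_of_lt_of_le (by positivity) hα
  have hstep : |1 / α₀| * (|un| + Real.sqrt (γ * p / ρ)) ≤ 1 := by
    rw [abs_of_pos (by positivity), one_div_mul_eq_div, div_le_one hα₀]
    exact hα
  refine ⟨euler_add_smul_flux_mem_eulerAdmissible γ ρ u v E p ν₁ ν₂ _ hγ hρ hp hppos hν hstep, ?_⟩
  rw [sub_eq_add_neg, ← neg_smul]
  exact euler_add_smul_flux_mem_eulerAdmissible γ ρ u v E p ν₁ ν₂ _ hγ hρ hp hppos hν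
    (by rwa [abs_neg])
end

section
/- For an entropy pair with entropy variables V = ∂η/∂U and potentials ψ, if the two-point flux F^⋆ satisfies the sign-weighted entropy stability condition P_{ij}[(V_i^F − V_j^C)·(F^⋆(U_i^F, U_j^C)·n_{ij}) − (ψ_i^F − ψ_j^C)·n_{ij}] ≤ 0 for all i,j, and the interface flux sums are defined with the interpolation/projection matrices satisfying the mass compatibility, row-sum, and normal-reproduction identities, then the net interface entropy production NET_ent = Σ_k Σ_i w_i[(F_i^{F_k,*}·n_i^{F_k})·V_i^{F_k} − ψ_i^{F_k}·n_i^{F_k}] + Σ_j w_j[(F_j^{C,*}·n_j^C)·V_j^C − ψ_j^C·n_j^C] equals Σ_k Σ_i Σ_j w_i (P_{C→F_k})_{ij}[(F^⋆(U_i^{F_k},U_j^C)·n_{ij}^{F_k,C})·(V_i^{F_k} − V_j^C) − (ψ_i^{F_k} − ψ_j^C)·n_{ij}^{F_k,C}] and is therefore ≤ 0. -/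
open Matrix

lemma mySumDot {n m : ℕ} (s : Finset (Fin n)) (f : Fin n → (Fin m → ℝ)) (v : Fin m → ℝ) :
    (∑ j ∈ s, f j) ⬝ᵥ v = ∑ j ∈ s, f j ⬝ᵥ v := by
  simp only [dotProduct, Finset.sum_apply, Finset.sum_mul]
  exact Finset.sum_comm

lemma myDotSum {n m : ℕ} (s : Finset (Fin n)) (f : Fin n → (Fin m → ℝ)) (v : Fin m → ℝ) :
    v ⬝ᵥ (∑ j ∈ s, f j) = ∑ j ∈ s, v ⬝ᵥ f j := by
  simp only [dotProduct, Finset.sum_apply, Finset.mul_sum]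
  exact Finset.sum_comm

lemma mySwap {a b c : ℕ} (f : Fin a → Fin b → Fin c → ℝ) :
    ∑ k, ∑ i, ∑ j, f k i j = ∑ j, ∑ k, ∑ i, f k i j :=
  calc ∑ k, ∑ i, ∑ j, f k i j
      = ∑ k, ∑ j, ∑ i, f k i j :=
        Finset.sum_congr rfl fun k _ => Finset.sum_comm
    _ = ∑ j, ∑ k, ∑ i, f k i j := Finset.sum_comm

/-- Entropy stability of the nonconforming interface coupling: under the
sign-weighted entropy stability condition on the two-point flux and the algebraic
compatibility, row-sum, and normal-reproduction identities, the net interface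
entropy production equals the sign-weighted sum and is nonpositive. -/
theorem nonconforming_interface_entropy_stability
    (N : ℕ) (w : Fin (N + 1) → ℝ) (hw : ∀ i, 0 < w i)
    (P Q : Fin 2 → Matrix (Fin (N + 1)) (Fin (N + 1)) ℝ)
    (nF : Fin 2 → Fin (N + 1) → (Fin 2 → ℝ)) (nC : Fin (N + 1) → (Fin 2 → ℝ))
    (nij : Fin 2 → Fin (N + 1) → Fin (N + 1) → (Fin 2 → ℝ))
    (Fs : Fin 2 → Fin (N + 1) → Fin (N + 1) → (Fin 4 → ℝ))
    (VF : Fin 2 → Fin (N + 1) → (Fin 4 → ℝ)) (VC : Fin (N + 1) → (Fin 4 → ℝ))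
    (ψF : Fin 2 → Fin (N + 1) → (Fin 2 → ℝ)) (ψC : Fin (N + 1) → (Fin 2 → ℝ))
    (hnij : ∀ k i j, nij k i j = (1/2 : ℝ) • (nF k i - (1/2 : ℝ) • nC j))
    (hcompat : ∀ k i j, w i * P k i j = 2 * w j * Q k j i)
    (hrow : ∀ k i, ∑ j, P k i j = 1)
    (hnorm : ∀ k i, ∑ j, P k i j • nC j = (-2 : ℝ) • nF k i)
    (hqsum : ∀ j, ∑ k, ∑ i, Q k j i = 1)
    (hqnorm : ∀ j, ∑ k, ∑ i, Q k j i • nF k i = (-(1/2) : ℝ) • nC j)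
    (hES : ∀ k i j, P k i j *
        ((Fs k i j ⬝ᵥ (VF k i - VC j)) - ((ψF k i - ψC j) ⬝ᵥ nij k i j)) ≤ 0) :
    let NET : ℝ :=
      (∑ k, ∑ i, w i *
          (((∑ j, P k i j • Fs k i j) ⬝ᵥ VF k i) - (ψF k i ⬝ᵥ nF k i)))
        + (∑ j, w j *
          ((((-2 : ℝ) • ∑ k, ∑ i, Q k j i • Fs k i j) ⬝ᵥ VC j) - (ψC j ⬝ᵥ nC j)))
    NET = (∑ k, ∑ i, ∑ j, w i * P k i j *
        ((Fs k i j ⬝ᵥ (VF k i - VC j)) - ((ψF k i - ψC j) ⬝ᵥ nij k i j)))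
      ∧ NET ≤ 0 := by
  dsimp only
  -- Identity (2): fine entropy-potential terms
  have h2 : ∀ k i, ∑ j, P k i j * (ψF k i ⬝ᵥ nij k i j) = ψF k i ⬝ᵥ nF k i := by
    intro k i
    have hnc : ∑ j, P k i j * (ψF k i ⬝ᵥ nC j) = -2 * (ψF k i ⬝ᵥ nF k i) := by
      have := congrArg (fun v => ψF k i ⬝ᵥ v) (hnorm k i)
      simpa [myDotSum, dotProduct_smul, smul_eq_mul] using this
    have expand : ∀ j, P k i j * (ψF k i ⬝ᵥ nij k i j)
        = (1/2 * (ψF k i ⬝ᵥ nF k i)) * P k i j - (1/4) * (P k i j * (ψF k i ⬝ᵥ nC j)) := by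
      intro j
      rw [hnij]
      simp only [dotProduct_smul, dotProduct_sub, smul_eq_mul]
      ring
    rw [Finset.sum_congr rfl fun j _ => expand j, Finset.sum_sub_distrib,
      ← Finset.mul_sum, ← Finset.mul_sum, hrow, hnc]
    ring
  -- Identity (3): coarse entropy-potential terms, per coarse node j
  have h3 : ∀ j, ∑ k, ∑ i, w i * P k i j * (ψC j ⬝ᵥ nij k i j)
      = -(w j * (ψC j ⬝ᵥ nC j)) := by
    intro j
    have hqn : ∑ k, ∑ i, Q k j i * (ψC j ⬝ᵥ nF k i) = -(1/2) * (ψC j ⬝ᵥ nC j) := by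
      have := congrArg (fun v => ψC j ⬝ᵥ v) (hqnorm j)
      simpa [myDotSum, dotProduct_smul, smul_eq_mul] using this
    have expand : ∀ k i, w i * P k i j * (ψC j ⬝ᵥ nij k i j)
        = w j * (Q k j i * (ψC j ⬝ᵥ nF k i))
          - ((1/2) * w j * (ψC j ⬝ᵥ nC j)) * Q k j i := by
      intro k i
      rw [hnij]
      have hc := hcompat k i j
      simp only [dotProduct_smul, dotProduct_sub, smul_eq_mul]
      linear_combination (1/2 * (ψC j ⬝ᵥ nF k i) - 1/4 * (ψC j ⬝ᵥ nC j)) * hc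
    calc ∑ k, ∑ i, w i * P k i j * (ψC j ⬝ᵥ nij k i j)
        = ∑ k, ∑ i, (w j * (Q k j i * (ψC j ⬝ᵥ nF k i))
            - ((1/2) * w j * (ψC j ⬝ᵥ nC j)) * Q k j i) :=
          Finset.sum_congr rfl fun k _ => Finset.sum_congr rfl fun i _ => expand k i
      _ = w j * (∑ k, ∑ i, Q k j i * (ψC j ⬝ᵥ nF k i))
            - ((1/2) * w j * (ψC j ⬝ᵥ nC j)) * (∑ k, ∑ i, Q k j i) := by
          simp only [Finset.sum_sub_distrib, Finset.mul_sum, Finset.sum_mul]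
      _ = -(w j * (ψC j ⬝ᵥ nC j)) := by rw [hqn, hqsum]; ring
  -- Identity (1): the coarse flux sum equals minus the fine-indexed triple sum
  have h1 : ∑ j, w j * (((-2 : ℝ) • ∑ k, ∑ i, Q k j i • Fs k i j) ⬝ᵥ VC j)
      = -(∑ k, ∑ i, ∑ j, w i * P k i j * (Fs k i j ⬝ᵥ VC j)) := by
    rw [mySwap (fun k i j => w i * P k i j * (Fs k i j ⬝ᵥ VC j)), ← Finset.sum_neg_distrib]
    refine Finset.sum_congr rfl fun j _ => ?_
    have hP : ∑ k, ∑ i, w i * P k i j * (Fs k i j ⬝ᵥ VC j)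
        = 2 * w j * (∑ k, ∑ i, Q k j i * (Fs k i j ⬝ᵥ VC j)) := by
      rw [Finset.mul_sum]
      refine Finset.sum_congr rfl fun k _ => ?_
      rw [Finset.mul_sum]
      refine Finset.sum_congr rfl fun i _ => ?_
      have hc := hcompat k i j
      linear_combination (Fs k i j ⬝ᵥ VC j) * hc
    have hdot : ((-2 : ℝ) • ∑ k, ∑ i, Q k j i • Fs k i j) ⬝ᵥ VC j
        = -2 * (∑ k, ∑ i, Q k j i * (Fs k i j ⬝ᵥ VC j)) := by
      rw [smul_dotProduct, mySumDot, smul_eq_mul]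
      congr 1
      refine Finset.sum_congr rfl fun k _ => ?_
      rw [mySumDot]
      exact Finset.sum_congr rfl fun i _ => by
        rw [smul_dotProduct, smul_eq_mul]
    rw [hdot, hP]
    ring
  -- Main equality
  have hEq : (∑ k, ∑ i, w i *
          (((∑ j, P k i j • Fs k i j) ⬝ᵥ VF k i) - (ψF k i ⬝ᵥ nF k i)))
        + (∑ j, w j *
          ((((-2 : ℝ) • ∑ k, ∑ i, Q k j i • Fs k i j) ⬝ᵥ VC j) - (ψC j ⬝ᵥ nC j)))
      = ∑ k, ∑ i, ∑ j, w i * P k i j *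
        ((Fs k i j ⬝ᵥ (VF k i - VC j)) - ((ψF k i - ψC j) ⬝ᵥ nij k i j)) := by
    have rhsExpand : ∑ k, ∑ i, ∑ j, w i * P k i j *
          ((Fs k i j ⬝ᵥ (VF k i - VC j)) - ((ψF k i - ψC j) ⬝ᵥ nij k i j))
        = (∑ k, ∑ i, ∑ j, w i * P k i j * (Fs k i j ⬝ᵥ VF k i))
          - (∑ k, ∑ i, ∑ j, w i * P k i j * (Fs k i j ⬝ᵥ VC j))
          - (∑ k, ∑ i, ∑ j, w i * P k i j * (ψF k i ⬝ᵥ nij k i j))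
          + (∑ k, ∑ i, ∑ j, w i * P k i j * (ψC j ⬝ᵥ nij k i j)) := by
      simp only [dotProduct_sub, sub_dotProduct, ← Finset.sum_add_distrib,
        ← Finset.sum_sub_distrib]
      refine Finset.sum_congr rfl fun k _ => Finset.sum_congr rfl fun i _ =>
        Finset.sum_congr rfl fun j _ => by ring
    have lhs1 : ∑ k, ∑ i, w i *
          (((∑ j, P k i j • Fs k i j) ⬝ᵥ VF k i) - (ψF k i ⬝ᵥ nF k i))
        = (∑ k, ∑ i, ∑ j, w i * P k i j * (Fs k i j ⬝ᵥ VF k i))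
          - (∑ k, ∑ i, w i * (ψF k i ⬝ᵥ nF k i)) := by
      rw [← Finset.sum_sub_distrib]
      refine Finset.sum_congr rfl fun k _ => ?_
      rw [← Finset.sum_sub_distrib]
      refine Finset.sum_congr rfl fun i _ => ?_
      rw [mySumDot, mul_sub, Finset.mul_sum]
      congr 1
      refine Finset.sum_congr rfl fun j _ => ?_
      rw [smul_dotProduct, smul_eq_mul]
      ring
    have lhs2 : ∑ j, w j *
          ((((-2 : ℝ) • ∑ k, ∑ i, Q k j i • Fs k i j) ⬝ᵥ VC j) - (ψC j ⬝ᵥ nC j))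
        = (∑ j, w j * (((-2 : ℝ) • ∑ k, ∑ i, Q k j i • Fs k i j) ⬝ᵥ VC j))
          - (∑ j, w j * (ψC j ⬝ᵥ nC j)) := by
      rw [← Finset.sum_sub_distrib]
      exact Finset.sum_congr rfl fun j _ => by ring
    have h2' : ∑ k, ∑ i, ∑ j, w i * P k i j * (ψF k i ⬝ᵥ nij k i j)
        = ∑ k, ∑ i, w i * (ψF k i ⬝ᵥ nF k i) := by
      refine Finset.sum_congr rfl fun k _ => Finset.sum_congr rfl fun i _ => ?_
      rw [← h2 k i, Finset.mul_sum]
      exact Finset.sum_congr rfl fun j _ => by ring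
    have h3' : ∑ k, ∑ i, ∑ j, w i * P k i j * (ψC j ⬝ᵥ nij k i j)
        = -(∑ j, w j * (ψC j ⬝ᵥ nC j)) := by
      rw [mySwap (fun k i j => w i * P k i j * (ψC j ⬝ᵥ nij k i j)), ← Finset.sum_neg_distrib]
      exact Finset.sum_congr rfl fun j _ => h3 j
    rw [rhsExpand, lhs1, lhs2, h1, h2', h3']
    ring
  refine ⟨hEq, ?_⟩
  rw [hEq]
  refine Finset.sum_nonpos fun k _ => Finset.sum_nonpos fun i _ =>
    Finset.sum_nonpos fun j _ => ?_
  rw [mul_assoc]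
  exact mul_nonpos_of_nonneg_of_nonpos (le_of_lt (hw i)) (hES k i j)
end

section
/- For one-dimensional LGL nodes ξ₀,…,ξ_N with weights w_i > 0 and differentiation matrix D_{ij} = φ_j'(ξ_i), the SBP property w_i D_{ij} + w_j D_{ji} = δ_{iN}δ_{jN} − δ_{i0}δ_{j0} together with consistency Σ_j D_{ij} = 0 implies, for any symmetric two-point function F#(a,b) = F#(b,a) and nodal values {u_i}, the telescoping identity 2 Σ_{i,j} w_i D_{ij} F#(u_i,u_j) = F#(u_N,u_N) − F#(u_0,u_0) = F(u_N) − F(u_0), where F(u) := F#(u,u). -/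
/-- SBP telescoping identity: the SBP property and consistency of the LGL
differentiation matrix imply, for any symmetric two-point function `F#`,
`2 ∑_{i,j} w_i D_{ij} F#(u_i,u_j) = F#(u_N,u_N) - F#(u_0,u_0)`. -/
theorem sbp_telescoping
    (N : ℕ) (w : Fin (N + 1) → ℝ) (D : Matrix (Fin (N + 1)) (Fin (N + 1)) ℝ)
    (hw : ∀ i, 0 < w i)
    (hSBP : ∀ i j, w i * D i j + w j * D j i =
      (if i = Fin.last N ∧ j = Fin.last N then (1 : ℝ) else 0)
        - (if i = 0 ∧ j = 0 then (1 : ℝ) else 0))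
    (hcons : ∀ i, ∑ j, D i j = 0)
    (X : Type*) (Fs : X → X → ℝ) (hsym : ∀ a b, Fs a b = Fs b a)
    (u : Fin (N + 1) → X) :
    2 * ∑ i, ∑ j, w i * D i j * Fs (u i) (u j)
      = Fs (u (Fin.last N)) (u (Fin.last N)) - Fs (u 0) (u 0) := by
  have hswap : ∑ i, ∑ j, w i * D i j * Fs (u i) (u j)
      = ∑ i, ∑ j, w j * D j i * Fs (u i) (u j) := by
    rw [Finset.sum_comm]
    refine Finset.sum_congr rfl fun j _ => Finset.sum_congr rfl fun i _ => ?_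
    rw [hsym]
  have : 2 * ∑ i, ∑ j, w i * D i j * Fs (u i) (u j)
      = ∑ i, ∑ j, (w i * D i j + w j * D j i) * Fs (u i) (u j) := by
    rw [two_mul]
    nth_rewrite 2 [hswap]
    rw [← Finset.sum_add_distrib]
    refine Finset.sum_congr rfl fun i _ => ?_
    rw [← Finset.sum_add_distrib]
    refine Finset.sum_congr rfl fun j _ => ?_
    ring
  rw [this]
  have : ∀ i j : Fin (N + 1), (w i * D i j + w j * D j i) * Fs (u i) (u j)
      = (if i = Fin.last N ∧ j = Fin.last N then Fs (u i) (u j) else 0)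
        - (if i = 0 ∧ j = 0 then Fs (u i) (u j) else 0) := by
    intro i j
    rw [hSBP]
    split_ifs <;> ring
  simp only [this, Finset.sum_sub_distrib, ite_and]
  simp [Finset.sum_ite_eq']
end
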